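/- The 3-dimensional subspace of ℝ^6 consisting of vectors v with ⟨v1, v⟩ = ⟨v2, v⟩ = ⟨v3, v⟩ = 0, where v1 = (1,−1,0,1,0,0), v2 = (1,0,−1,0,1,0), v3 = (0,1,−1,0,0,1), is invariant under each of the 12 linear maps v ↦ v B^{(i)} given by the strong arbitrage matrices. -/

import Mathlib

/-- The 12 linear maps on `ℝ⁶` given by the strong arbitrage matrices `B⁽ⁱ⁾`
(in coordinates `x = (x 0, …, x 5)`, 0-indexed). -/
noncomputable def Bmaps : Fin 12 → (Fin 6 → ℝ) → (Fin 6 → ℝ) :=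
  ![fun x => Function.update x 0 (x 1 - x 3),
    fun x => Function.update x 0 (x 2 - x 4),
    fun x => Function.update x 1 (x 0 + x 3),
    fun x => Function.update x 1 (x 2 - x 5),
    fun x => Function.update x 2 (x 0 + x 4),
    fun x => Function.update x 2 (x 1 + x 5),
    fun x => Function.update x 3 (x 1 - x 0),
    fun x => Function.update x 3 (x 4 - x 5),
    fun x => Function.update x 4 (x 2 - x 0),
    fun x => Function.update x 4 (x 3 + x 5),
    fun x => Function.update x 5 (x 2 - x 1),
    fun x => Function.update x 5 (x 4 - x 3)]

/-- Dot product on `ℝ⁶`. -/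
noncomputable def dot (a b : Fin 6 → ℝ) : ℝ := ∑ i, a i * b i

def v1 : Fin 6 → ℝ := ![1, -1, 0, 1, 0, 0]
def v2 : Fin 6 → ℝ := ![1, 0, -1, 0, 1, 0]
def v3 : Fin 6 → ℝ := ![0, 1, -1, 0, 0, 1]

/-!
Each `B⁽ⁱ⁾` changes a single coordinate `x j`, and the new value differs from `x j` by
`± ⟨v_k, x⟩` for one of `v1, v2, v3`. Hence every `B⁽ⁱ⁾` fixes the subspace pointwise.
-/

lemma dot_v1 (x : Fin 6 → ℝ) : dot v1 x = x 0 - x 1 + x 3 := by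
  simp [dot, Fin.sum_univ_six, v1]; ring

lemma dot_v2 (x : Fin 6 → ℝ) : dot v2 x = x 0 - x 2 + x 4 := by
  simp [dot, Fin.sum_univ_six, v2]; ring

lemma dot_v3 (x : Fin 6 → ℝ) : dot v3 x = x 1 - x 2 + x 5 := by
  simp [dot, Fin.sum_univ_six, v3]; ring

lemma Bmaps_apply_eq_self {x : Fin 6 → ℝ} (h1 : dot v1 x = 0) (h2 : dot v2 x = 0)
    (h3 : dot v3 x = 0) (i : Fin 12) : Bmaps i x = x := by
  rw [dot_v1] at h1
  rw [dot_v2] at h2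
  rw [dot_v3] at h3
  fin_cases i <;> simp [Bmaps, Function.update_eq_self_iff] <;> linarith

/-- The 3-dimensional subspace `⟨v1,v⟩ = ⟨v2,v⟩ = ⟨v3,v⟩ = 0` of `ℝ⁶` is invariant under
each of the 12 linear maps `v ↦ v B⁽ⁱ⁾` given by the strong arbitrage matrices. -/
theorem stmt6 :
    ∀ i : Fin 12, ∀ x : Fin 6 → ℝ,
      dot v1 x = 0 → dot v2 x = 0 → dot v3 x = 0 →
      dot v1 (Bmaps i x) = 0 ∧ dot v2 (Bmaps i x) = 0 ∧ dot v3 (Bmaps i x) = 0 := by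
  intro i x h1 h2 h3
  rw [Bmaps_apply_eq_self h1 h2 h3 i]
  exact ⟨h1, h2, h3⟩
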